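/- Let β > 0, K ≥ 1, and u_0(x) = r^{-β} Σ_{s=1}^r |k_s| v_s cos(k_s·x) with |k_s| ≈ 2^{s-1}K and |v_s| ≈ 1. Then c r^{-β} ≤ ‖u_0‖_{Ḃ^{-1}_{∞,∞}} ≤ C r^{-β}, where ‖f‖_{Ḃ^{-1}_{∞,∞}} = sup_{t>0} t^{1/2} ‖e^{tΔ}f‖_{L^∞}, with constants c, C independent of r and K. -/

import Mathlib

/-- Euclidean dot product on `ℝ³`. -/
def dot3 (a b : Fin 3 → ℝ) : ℝ := ∑ i, a i * b i

/-- Euclidean norm on `ℝ³`. -/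
noncomputable def enorm3 (a : Fin 3 → ℝ) : ℝ := Real.sqrt (dot3 a a)

/-!
Upper bound: since `|k_s| ≈ 2^{s-1}K` and `|v_s| ≤ 1`, `√t |e^{tΔ}u₀(x)|` is at most
`2 r^{-β} ∑_j 2^j a e^{-(2^j a)²}` with `a = K√t`, and this dyadic sum is `≤ 2π` uniformly in `a`
because `x e^{-x²} ≤ 4 (arctan 2x - arctan x)` telescopes.
Lower bound: at `x = 0` every mode contributes nonnegatively to the second coordinate, so at time
`t = |k_1|⁻²` the first mode alone gives `√t |e^{tΔ}u₀(0)| ≥ r^{-β} e⁻¹ / 2`.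
-/

open Real Finset

lemma enorm3_eq_norm (a : Fin 3 → ℝ) : enorm3 a = ‖WithLp.toLp 2 a‖ := by
  simp [enorm3, dot3, EuclideanSpace.norm_eq, sq]

lemma enorm3_sq (a : Fin 3 → ℝ) : enorm3 a ^ 2 = a 0 ^ 2 + a 1 ^ 2 + a 2 ^ 2 := by
  have h : 0 ≤ dot3 a a := sum_nonneg fun i _ => mul_self_nonneg (a i)
  rw [enorm3, sq_sqrt h]
  simp [dot3, Fin.sum_univ_three, sq]

lemma enorm3_nonneg (a : Fin 3 → ℝ) : 0 ≤ enorm3 a := sqrt_nonneg _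

lemma abs_apply_le_enorm3 (a : Fin 3 → ℝ) (i : Fin 3) : |a i| ≤ enorm3 a := by
  simpa [enorm3_eq_norm] using PiLp.norm_apply_le (WithLp.toLp 2 a) i

lemma enorm3_smul (c : ℝ) (a : Fin 3 → ℝ) : enorm3 (c • a) = |c| * enorm3 a := by
  simp [enorm3_eq_norm, norm_smul]

lemma enorm3_sum_smul_le {ι : Type*} (s : Finset ι) (c : ι → ℝ) (w : ι → Fin 3 → ℝ) :
    enorm3 (∑ i ∈ s, c i • w i) ≤ ∑ i ∈ s, |c i| * enorm3 (w i) := by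
  simpa [enorm3_eq_norm, WithLp.toLp_sum, norm_smul] using
    norm_sum_le s fun i => c i • WithLp.toLp 2 (w i)

lemma mul_exp_neg_sq_le_arctan_two_mul_sub {x : ℝ} (hx : 0 ≤ x) :
    x * exp (-x ^ 2) ≤ 4 * (arctan (2 * x) - arctan x) := by
  have hexp : exp (-x ^ 2) ≤ 1 / (1 + x ^ 2) := by
    rw [exp_neg, one_div]
    exact inv_anti₀ (by positivity) (by linarith [add_one_le_exp (x ^ 2)])
  have hquarter : 1 / (1 + x ^ 2) ≤ 4 * (1 / (1 + (2 * x) ^ 2)) := by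
    rw [mul_one_div, div_le_div_iff₀ (by positivity) (by positivity)]
    nlinarith [sq_nonneg x]
  -- `1 / (1 + u²)` is at least `1 / (1 + 4x²)` on `[x, 2x]`, an interval of length `x`
  have hint : x * (1 / (1 + (2 * x) ^ 2)) ≤ arctan (2 * x) - arctan x := by
    rw [← integral_one_div_one_add_sq]
    calc x * (1 / (1 + (2 * x) ^ 2)) = ∫ _ in x..2 * x, 1 / (1 + (2 * x) ^ 2) := by
          simp only [intervalIntegral.integral_const, smul_eq_mul]; ring
      _ ≤ ∫ u in x..2 * x, 1 / (1 + u ^ 2) := by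
          refine intervalIntegral.integral_mono_on (by linarith) intervalIntegrable_const
            ((continuous_const.div (by fun_prop) fun u => by positivity).intervalIntegrable _ _)
            fun u hu => ?_
          gcongr 1 / (1 + ?_)
          nlinarith [hu.1, hu.2]
  calc x * exp (-x ^ 2) ≤ x * (4 * (1 / (1 + (2 * x) ^ 2))) := by gcongr; linarith
    _ ≤ 4 * (arctan (2 * x) - arctan x) := by nlinarith

/-- The dyadic sum `∑ 2ʲa e^{-(2ʲa)²}` telescopes against `arctan`, uniformly in `a` and `n`. -/
lemma sum_two_pow_mul_exp_neg_sq_le {a : ℝ} (ha : 0 ≤ a) (n : ℕ) :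
    ∑ j ∈ range n, 2 ^ j * a * exp (-(2 ^ j * a) ^ 2) ≤ 2 * π := by
  calc ∑ j ∈ range n, 2 ^ j * a * exp (-(2 ^ j * a) ^ 2)
      ≤ ∑ j ∈ range n, 4 * (arctan (2 ^ (j + 1) * a) - arctan (2 ^ j * a)) := by
        refine sum_le_sum fun j _ => ?_
        have h := mul_exp_neg_sq_le_arctan_two_mul_sub (x := 2 ^ j * a) (by positivity)
        rwa [← mul_assoc, ← pow_succ'] at h
    _ = 4 * (arctan (2 ^ n * a) - arctan a) := by
        rw [← mul_sum, sum_range_sub fun j => arctan (2 ^ j * a), pow_zero, one_mul]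
    _ ≤ 4 * (π / 2 - 0) := by
        gcongr
        · exact (arctan_lt_pi_div_two _).le
        · exact arctan_nonneg.mpr ha
    _ = 2 * π := by ring

lemma sqrt_mul_sum_lacunary_le {K t : ℝ} (hK : 0 ≤ K) (ht : 0 ≤ t) (r : ℕ) :
    √t * ∑ s ∈ Icc 1 r, 2 ^ (s - 1) * K * exp (-(2 ^ (s - 1) * K) ^ 2 * t) ≤ 2 * π := by
  have hterm : ∀ j : ℕ, √t * (2 ^ j * K * exp (-(2 ^ j * K) ^ 2 * t))
      = 2 ^ j * (K * √t) * exp (-(2 ^ j * (K * √t)) ^ 2) := fun j => by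
    rw [mul_pow _ (K * √t), mul_pow K, sq_sqrt ht]; ring_nf
  rw [mul_sum, ← Ico_add_one_right_eq_Icc, sum_Ico_eq_sum_range]
  simp only [add_comm 1 _, Nat.add_sub_cancel, hterm]
  exact sum_two_pow_mul_exp_neg_sq_le (by positivity) r

/-- `sup_{t>0} t^{1/2} sup_x G t x`; with `G t x = |e^{tΔ}u₀(x)|` this is `‖u₀‖_{Ḃ^{-1}_{∞,∞}}`. -/
noncomputable def besovNorm {α : Type*} (G : ℝ → α → ℝ) : ℝ :=
  sSup ((fun t : ℝ => t ^ ((1 : ℝ) / 2) * sSup (Set.range (G t))) '' Set.Ioi 0)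

section besovNorm

variable {α : Type*} {G : ℝ → α → ℝ} {B : ℝ}

lemma rpow_half_mul_sSup_le (hB : 0 ≤ B) (hG : ∀ t > 0, ∀ x, √t * G t x ≤ B) {t : ℝ}
    (ht : 0 < t) : t ^ ((1 : ℝ) / 2) * sSup (Set.range (G t)) ≤ B := by
  have hsup : sSup (Set.range (G t)) ≤ B / √t := by
    refine Real.sSup_le ?_ (by positivity)
    rintro _ ⟨x, rfl⟩
    rw [le_div_iff₀' (sqrt_pos.mpr ht)]
    exact hG t ht x
  calc t ^ ((1 : ℝ) / 2) * sSup (Set.range (G t)) ≤ √t * (B / √t) := by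
        rw [← sqrt_eq_rpow]; gcongr
    _ = B := mul_div_cancel₀ B (sqrt_pos.mpr ht).ne'

lemma besovNorm_le (hB : 0 ≤ B) (hG : ∀ t > 0, ∀ x, √t * G t x ≤ B) : besovNorm G ≤ B :=
  Real.sSup_le (by rintro _ ⟨t, ht, rfl⟩; exact rpow_half_mul_sSup_le hB hG ht) hB

lemma sqrt_mul_le_besovNorm (hB : 0 ≤ B) (hG : ∀ t > 0, ∀ x, √t * G t x ≤ B) {t : ℝ}
    (ht : 0 < t) (x : α) : √t * G t x ≤ besovNorm G := by
  have hbdd : BddAbove (Set.range (G t)) :=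
    ⟨B / √t, by rintro _ ⟨y, rfl⟩; rw [le_div_iff₀' (sqrt_pos.mpr ht)]; exact hG t ht y⟩
  calc √t * G t x ≤ t ^ ((1 : ℝ) / 2) * sSup (Set.range (G t)) := by
        rw [← sqrt_eq_rpow]; gcongr; exact le_csSup hbdd ⟨x, rfl⟩
    _ ≤ besovNorm G :=
        le_csSup ⟨B, by rintro _ ⟨s, hs, rfl⟩; exact rpow_half_mul_sSup_le hB hG hs⟩ ⟨t, ht, rfl⟩

end besovNorm

/-- `e^{tΔ}` applied to `∑_{s=1}^r |k_s| v_s cos(k_s·x)`, mode by mode. -/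
noncomputable def heatFlowSum (k v : ℕ → Fin 3 → ℝ) (r : ℕ) (t : ℝ) (x : Fin 3 → ℝ) :
    Fin 3 → ℝ :=
  ∑ s ∈ Icc 1 r, (enorm3 (k s) * exp (-(enorm3 (k s)) ^ 2 * t) * cos (dot3 (k s) x)) • v s

lemma mul_exp_neg_sq_mul_le {m L t : ℝ} (hL : 0 ≤ L) (hLm : L ≤ m) (hm : m ≤ 2 * L)
    (ht : 0 ≤ t) : m * exp (-m ^ 2 * t) ≤ 2 * (L * exp (-L ^ 2 * t)) := by
  rw [← mul_assoc]
  gcongr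

section heatFlowSum

variable {k v : ℕ → Fin 3 → ℝ} {r : ℕ}

lemma enorm3_heatFlowSum_le (hv : ∀ s, enorm3 (v s) ≤ 1) (t : ℝ) (x : Fin 3 → ℝ) :
    enorm3 (heatFlowSum k v r t x)
      ≤ ∑ s ∈ Icc 1 r, enorm3 (k s) * exp (-(enorm3 (k s)) ^ 2 * t) := by
  refine (enorm3_sum_smul_le _ _ _).trans (sum_le_sum fun s _ => ?_)
  have hamp : 0 ≤ enorm3 (k s) * exp (-(enorm3 (k s)) ^ 2 * t) :=
    mul_nonneg (enorm3_nonneg _) (exp_pos _).le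
  rw [abs_mul, abs_of_nonneg hamp]
  calc _ * |cos (dot3 (k s) x)| * enorm3 (v s) ≤ _ * 1 * 1 := by
        gcongr
        · exact enorm3_nonneg _
        · exact abs_cos_le_one _
        · exact hv s
    _ = _ := by ring

lemma sqrt_mul_enorm3_heatFlowSum_le {K : ℝ} (hK : 0 ≤ K)
    (hk : ∀ s, 2 ^ (s - 1) * K ≤ enorm3 (k s) ∧ enorm3 (k s) ≤ 2 * (2 ^ (s - 1) * K))
    (hv : ∀ s, enorm3 (v s) ≤ 1) {t : ℝ} (ht : 0 ≤ t) (x : Fin 3 → ℝ) :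
    √t * enorm3 (heatFlowSum k v r t x) ≤ 4 * π :=
  calc √t * enorm3 (heatFlowSum k v r t x)
      ≤ √t * ∑ s ∈ Icc 1 r, 2 * (2 ^ (s - 1) * K * exp (-(2 ^ (s - 1) * K) ^ 2 * t)) := by
        gcongr
        refine (enorm3_heatFlowSum_le hv t x).trans (sum_le_sum fun s _ => ?_)
        exact mul_exp_neg_sq_mul_le (by positivity) (hk s).1 (hk s).2 ht
    _ = 2 * (√t * ∑ s ∈ Icc 1 r, 2 ^ (s - 1) * K * exp (-(2 ^ (s - 1) * K) ^ 2 * t)) := by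
        rw [← mul_sum]; ring
    _ ≤ 2 * (2 * π) := by gcongr 2 * ?_; exact sqrt_mul_sum_lacunary_le hK ht r
    _ = 4 * π := by ring

/-- At `x = 0` all modes are nonnegative in coordinate `i`, so all but the `s`-th can be dropped. -/
lemma exp_neg_one_mul_le_sqrt_mul_enorm3_heatFlowSum {s : ℕ} (hs : s ∈ Icc 1 r) (i : Fin 3)
    (hv : ∀ s, 0 ≤ v s i) (hk : 0 < enorm3 (k s)) :
    exp (-1) * v s i
      ≤ √((enorm3 (k s) ^ 2)⁻¹) * enorm3 (heatFlowSum k v r (enorm3 (k s) ^ 2)⁻¹ 0) := by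
  set m := enorm3 (k s)
  have hmode : m * exp (-m ^ 2 * (m ^ 2)⁻¹) * v s i ≤ heatFlowSum k v r (m ^ 2)⁻¹ 0 i := by
    simp only [heatFlowSum, Finset.sum_apply, Pi.smul_apply, smul_eq_mul, dot3, Pi.zero_apply,
      mul_zero, sum_const_zero, cos_zero, mul_one]
    exact single_le_sum (f := fun s => enorm3 (k s) * exp (-enorm3 (k s) ^ 2 * (m ^ 2)⁻¹) * v s i)
      (fun s _ => mul_nonneg (mul_nonneg (enorm3_nonneg _) (exp_pos _).le) (hv s)) hs
  calc exp (-1) * v s i = √((m ^ 2)⁻¹) * (m * exp (-m ^ 2 * (m ^ 2)⁻¹) * v s i) := by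
        rw [sqrt_inv, sqrt_sq hk.le, neg_mul, mul_inv_cancel₀ (by positivity)]
        field_simp
    _ ≤ √((m ^ 2)⁻¹) * enorm3 (heatFlowSum k v r (m ^ 2)⁻¹ 0) := by
        gcongr
        exact hmode.trans ((le_abs_self _).trans (abs_apply_le_enorm3 _ i))

end heatFlowSum

lemma enorm3_waveVector_bounds {L : ℝ} (hL : 1 ≤ L) :
    L ≤ enorm3 (![0, 1, 0] + ![0, 0, L]) ∧ enorm3 (![0, 1, 0] + ![0, 0, L]) ≤ 2 * L := by
  have hsq : enorm3 (![0, 1, 0] + ![0, 0, L]) ^ 2 = 1 + L ^ 2 := by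
    rw [enorm3_sq]; simp
  constructor
  · exact le_of_sq_le_sq (by rw [hsq]; linarith) (enorm3_nonneg _)
  · exact le_of_sq_le_sq (by rw [hsq]; nlinarith) (by linarith)

lemma enorm3_polarization_le_one {L : ℝ} (hL : 1 ≤ L) :
    enorm3 ![0, 1 / 2, -(1 / (2 * L))] ≤ 1 := by
  refine le_of_sq_le_sq ?_ zero_le_one
  have h : 1 / (2 * L) ≤ 1 / 2 := by gcongr; linarith
  rw [enorm3_sq]
  simp only [Matrix.cons_val_zero, Matrix.cons_val_one, Matrix.cons_val_two, Matrix.head_cons,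
    Matrix.tail_cons, neg_sq]
  nlinarith [one_div_pos.mpr (by linarith : (0 : ℝ) < 2 * L)]

theorem stmt19_general (β : ℝ) :
    ∃ c C : ℝ, 0 < c ∧ 0 < C ∧ ∀ K : ℝ, 1 ≤ K → ∀ r : ℕ, 1 ≤ r →
      ∀ k v : ℕ → Fin 3 → ℝ,
      (∀ s, k s = ![0, 1, 0] + ![0, 0, (2:ℝ)^(s-1) * K]) →
      (∀ s, v s = ![0, 1/2, -(1 / (2 * ((2:ℝ)^(s-1) * K)))]) →
      ∀ F : ℝ → (Fin 3 → ℝ) → Fin 3 → ℝ,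
      (F = fun t x => (r:ℝ) ^ (-β) •
        ∑ s ∈ Finset.Icc 1 r,
          (enorm3 (k s) * Real.exp (-(enorm3 (k s))^2 * t) * Real.cos (dot3 (k s) x)) • v s) →
      c * (r:ℝ) ^ (-β) ≤
          sSup ((fun t : ℝ => t ^ ((1:ℝ)/2) *
              sSup (Set.range fun x : Fin 3 → ℝ => enorm3 (F t x))) '' Set.Ioi (0:ℝ)) ∧
        sSup ((fun t : ℝ => t ^ ((1:ℝ)/2) *
              sSup (Set.range fun x : Fin 3 → ℝ => enorm3 (F t x))) '' Set.Ioi (0:ℝ))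
          ≤ C * (r:ℝ) ^ (-β) := by
  refine ⟨exp (-1) / 2, 4 * π, by positivity, by positivity,
    fun K hK r hr k v hk hv F hF => ?_⟩
  set R := (r : ℝ) ^ (-β)
  have hR : 0 < R := by positivity
  have hL : ∀ s, 1 ≤ (2 : ℝ) ^ (s - 1) * K := fun s =>
    one_le_mul_of_one_le_of_one_le (one_le_pow₀ one_le_two) hK
  have hkb : ∀ s, 2 ^ (s - 1) * K ≤ enorm3 (k s) ∧ enorm3 (k s) ≤ 2 * (2 ^ (s - 1) * K) :=
    fun s => hk s ▸ enorm3_waveVector_bounds (hL s)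
  have hF' : ∀ t x, enorm3 (F t x) = R * enorm3 (heatFlowSum k v r t x) := fun t x => by
    rw [hF, enorm3_smul, abs_of_pos hR]; rfl
  have hup : ∀ t > 0, ∀ x, √t * enorm3 (F t x) ≤ 4 * π * R := fun t ht x => by
    rw [hF', mul_left_comm, mul_comm _ R]
    exact mul_le_mul_of_nonneg_left (sqrt_mul_enorm3_heatFlowSum_le (by linarith) hkb
      (fun s => hv s ▸ enorm3_polarization_le_one (hL s)) ht.le x) hR.le
  change _ ≤ besovNorm (fun t x => enorm3 (F t x)) ∧ besovNorm (fun t x => enorm3 (F t x)) ≤ _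
  refine ⟨?_, besovNorm_le (by positivity) hup⟩
  have hk1 : 0 < enorm3 (k 1) := lt_of_lt_of_le (by linarith [hL 1]) (hkb 1).1
  have hv1 : ∀ s, 0 ≤ v s 1 := fun s => by rw [hv s]; norm_num
  set t₀ := (enorm3 (k 1) ^ 2)⁻¹
  calc exp (-1) / 2 * R = R * (exp (-1) * v 1 1) := by
        rw [hv 1, Matrix.cons_val_one, Matrix.cons_val_zero]; ring
    _ ≤ R * (√t₀ * enorm3 (heatFlowSum k v r t₀ 0)) := by
        gcongr R * ?_
        exact exp_neg_one_mul_le_sqrt_mul_enorm3_heatFlowSum (by simpa using hr) 1 hv1 hk1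
    _ = √t₀ * enorm3 (F t₀ 0) := by rw [hF']; ring
    _ ≤ besovNorm (fun t x => enorm3 (F t x)) :=
        sqrt_mul_le_besovNorm (by positivity) hup (by positivity) 0

/-- The negative-order Besov norm
`‖u₀‖_{Ḃ^{-1}_{∞,∞}} = sup_{t>0} t^{1/2} ‖e^{tΔ}u₀‖_{L^∞}` of the lacunary initial
data `u₀ = r^{-β} ∑_{s=1}^r |k_s| v_s cos(k_s·x)`, with `k_s = (0,1,0)+(0,0,2^(s-1)K)`
(so `|k_s| ≈ 2^(s-1)K`) and `v_s = (0,1/2,-1/(2·2^(s-1)K))` (so `|v_s| ≈ 1`), is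
comparable to `r^{-β}`: `c r^{-β} ≤ ‖u₀‖_{Ḃ^{-1}_{∞,∞}} ≤ C r^{-β}` with `c, C > 0`
independent of `r` and `K`.  Here `e^{tΔ}u₀` is the mode-wise heat flow
`r^{-β} ∑_s |k_s| e^{-|k_s|²t} v_s cos(k_s·x)`. -/
theorem stmt19 (β : ℝ) (hβ : 0 < β) :
    ∃ c C : ℝ, 0 < c ∧ 0 < C ∧ ∀ K : ℝ, 1 ≤ K → ∀ r : ℕ, 1 ≤ r →
      ∀ k v : ℕ → Fin 3 → ℝ,
      (∀ s, k s = ![0, 1, 0] + ![0, 0, (2:ℝ)^(s-1) * K]) →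
      (∀ s, v s = ![0, 1/2, -(1 / (2 * ((2:ℝ)^(s-1) * K)))]) →
      ∀ F : ℝ → (Fin 3 → ℝ) → Fin 3 → ℝ,
      (F = fun t x => (r:ℝ) ^ (-β) •
        ∑ s ∈ Finset.Icc 1 r,
          (enorm3 (k s) * Real.exp (-(enorm3 (k s))^2 * t) * Real.cos (dot3 (k s) x)) • v s) →
      c * (r:ℝ) ^ (-β) ≤
          sSup ((fun t : ℝ => t ^ ((1:ℝ)/2) *
              sSup (Set.range fun x : Fin 3 → ℝ => enorm3 (F t x))) '' Set.Ioi (0:ℝ)) ∧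
        sSup ((fun t : ℝ => t ^ ((1:ℝ)/2) *
              sSup (Set.range fun x : Fin 3 → ℝ => enorm3 (F t x))) '' Set.Ioi (0:ℝ))
          ≤ C * (r:ℝ) ^ (-β) :=
  stmt19_general β
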